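/- arXiv:1607.05991 — 3 statements merged into one kernel-verified Lean document; each statement's English description precedes it below -/
import Mathlib

section
/- Define F : ℝⁿ → ℝⁿ by F(p) = p/√(1+|p|²). Then F is differentiable, its Jacobian at p is DF(p)_{αβ} = (1+|p|²)^{-1/2} δ_{αβ} − p_α p_β (1+|p|²)^{-3/2}, and for every vector v ∈ ℝⁿ one has ⟨DF(p)v, v⟩ ≥ (1+|p|²)^{-3/2} |v|². -/
open scoped RealInnerProductSpace

private lemma hasF {n : ℕ} (p : EuclideanSpace ℝ (Fin n)) :
    HasFDerivAt (fun q : EuclideanSpace ℝ (Fin n) => ((1 + ‖q‖^2) ^ (-(1:ℝ)/2)) • q)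
      (((1 + ‖p‖^2) ^ (-(1:ℝ)/2)) • ContinuousLinearMap.id ℝ (EuclideanSpace ℝ (Fin n))
        + ((-(1 + ‖p‖^2) ^ (-(3:ℝ)/2)) • (innerSL ℝ p)).smulRight p) p := by
  have h0 : (0:ℝ) < 1 + ‖p‖^2 := by positivity
  have h1 : HasFDerivAt (fun q : EuclideanSpace ℝ (Fin n) => 1 + ‖q‖^2)
      (2 • (innerSL ℝ p)) p := by
    simpa using ((hasFDerivAt_id p).norm_sq.const_add 1)
  have h2 : HasDerivAt (fun x : ℝ => x ^ (-(1:ℝ)/2))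
      ((-(1:ℝ)/2) * (1 + ‖p‖^2) ^ (-(1:ℝ)/2 - 1)) (1 + ‖p‖^2) :=
    Real.hasDerivAt_rpow_const (Or.inl h0.ne')
  have h3 := (h2.comp_hasFDerivAt p h1).smul (hasFDerivAt_id p)
  refine h3.congr_fderiv ?_
  refine ContinuousLinearMap.ext fun v => ?_
  have he : (-(1:ℝ)/2 - 1) = (-(3:ℝ)/2) := by norm_num
  simp only [ContinuousLinearMap.add_apply, ContinuousLinearMap.coe_smul', Pi.smul_apply,
    ContinuousLinearMap.smulRight_apply, ContinuousLinearMap.id_apply, Function.comp,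
    innerSL_apply_apply, ContinuousLinearMap.smul_apply, id_eq, he, smul_eq_mul, two_smul]
  module

theorem stmt_4 (n : ℕ)
    (F : EuclideanSpace ℝ (Fin n) → EuclideanSpace ℝ (Fin n))
    (hF : ∀ p, F p = ((1 + ‖p‖^2) ^ (-(1:ℝ)/2)) • p) :
    Differentiable ℝ F ∧
    (∀ (p : EuclideanSpace ℝ (Fin n)) (α β : Fin n),
      fderiv ℝ F p (EuclideanSpace.single β 1) α
        = (1 + ‖p‖^2) ^ (-(1:ℝ)/2) * (if α = β then 1 else 0)
          - p α * p β * (1 + ‖p‖^2) ^ (-(3:ℝ)/2)) ∧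
    (∀ (p v : EuclideanSpace ℝ (Fin n)),
      (1 + ‖p‖^2) ^ (-(3:ℝ)/2) * ‖v‖^2 ≤ ⟪fderiv ℝ F p v, v⟫) := by
  have hFe : F = fun p => ((1 + ‖p‖^2) ^ (-(1:ℝ)/2)) • p := funext hF
  subst hFe
  have hd : ∀ p : EuclideanSpace ℝ (Fin n),
      fderiv ℝ (fun q : EuclideanSpace ℝ (Fin n) => ((1 + ‖q‖^2) ^ (-(1:ℝ)/2)) • q) p
        = (((1 + ‖p‖^2) ^ (-(1:ℝ)/2)) • ContinuousLinearMap.id ℝ (EuclideanSpace ℝ (Fin n))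
            + ((-(1 + ‖p‖^2) ^ (-(3:ℝ)/2)) • (innerSL ℝ p)).smulRight p) :=
    fun p => (hasF p).fderiv
  refine ⟨fun p => (hasF p).differentiableAt, ?_, ?_⟩
  · intro p α β
    rw [hd p]
    simp [ContinuousLinearMap.smulRight_apply, EuclideanSpace.inner_single_right,
      EuclideanSpace.single_apply, real_inner_smul_left]
    ring
  · intro p v
    rw [hd p]
    have h0 : (0:ℝ) < 1 + ‖p‖^2 := by positivity
    have hcs : ⟪p, v⟫ * ⟪p, v⟫ ≤ ⟪p, p⟫ * ⟪v, v⟫ := real_inner_mul_inner_self_le p v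
    have hpp : ⟪p, p⟫ = ‖p‖^2 := real_inner_self_eq_norm_sq p
    have hvv : ⟪v, v⟫ = ‖v‖^2 := real_inner_self_eq_norm_sq v
    have hsplit : (1 + ‖p‖^2) ^ (-(1:ℝ)/2) = (1 + ‖p‖^2) * (1 + ‖p‖^2) ^ (-(3:ℝ)/2) := by
      rw [← Real.rpow_one_add' h0.le (by norm_num)]
      norm_num
    have h3 : (0:ℝ) < (1 + ‖p‖^2) ^ (-(3:ℝ)/2) := Real.rpow_pos_of_pos h0 _
    have : ⟪(((1 + ‖p‖^2) ^ (-(1:ℝ)/2)) • ContinuousLinearMap.id ℝ (EuclideanSpace ℝ (Fin n))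
        + ((-(1 + ‖p‖^2) ^ (-(3:ℝ)/2)) • (innerSL ℝ p)).smulRight p) v, v⟫
        = (1 + ‖p‖^2) ^ (-(1:ℝ)/2) * ‖v‖^2
          - (1 + ‖p‖^2) ^ (-(3:ℝ)/2) * (⟪p, v⟫ * ⟪p, v⟫) := by
      simp only [ContinuousLinearMap.add_apply, ContinuousLinearMap.coe_smul', Pi.smul_apply,
        ContinuousLinearMap.smulRight_apply, ContinuousLinearMap.id_apply, innerSL_apply_apply,
        inner_add_left, real_inner_smul_left, hvv, smul_eq_mul]
      ring
    rw [this, hsplit]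
    rw [hpp, hvv] at hcs
    nlinarith [mul_le_mul_of_nonneg_left hcs h3.le]
end

section
/- Let H ≥ 0, H' ∈ ℝ, H'' ∈ ℝ, ε ≥ 0 with 3(H')² + 4εH² ≤ 2H·H'', and let p ∈ ℝ. With A = 3H(2+p²)(1+p²)^{-1/2}, B = −6pH'(1+p²)^{1/2}, C = p²(H''−2εH)(1+p²)^{3/2}, the discriminant satisfies B² − 4AC ≤ 12p²(1+p²)·[3(H')² − 2H·H'' + 4εH²] ≤ 0. -/
theorem stmt_9 (H H' H'' ε p : ℝ) (hH : 0 ≤ H) (hε : 0 ≤ ε)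
    (hstruct : 3*H'^2 + 4*ε*H^2 ≤ 2*H*H'') :
    (-(6*p*H'*(1+p^2) ^ ((1:ℝ)/2)))^2
        - 4 * (3*H*(2+p^2)*(1+p^2) ^ (-(1:ℝ)/2)) * (p^2*(H'' - 2*ε*H)*(1+p^2) ^ ((3:ℝ)/2))
      ≤ 12*p^2*(1+p^2) * (3*H'^2 - 2*H*H'' + 4*ε*H^2)
    ∧ 12*p^2*(1+p^2) * (3*H'^2 - 2*H*H'' + 4*ε*H^2) ≤ 0 := by
  have hs : (0:ℝ) < 1 + p^2 := by positivity
  have h1 : ((1+p^2) ^ ((1:ℝ)/2))^2 = 1 + p^2 := by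
    rw [← Real.rpow_natCast ((1+p^2) ^ ((1:ℝ)/2)) 2, ← Real.rpow_mul hs.le]
    norm_num
  have h2 : (1+p^2) ^ (-(1:ℝ)/2) * (1+p^2) ^ ((3:ℝ)/2) = 1 + p^2 := by
    rw [← Real.rpow_add hs]
    norm_num
  have key : 0 ≤ H * (H'' - 2*ε*H) := by nlinarith [sq_nonneg H']
  constructor
  · have e1 : (-(6*p*H'*(1+p^2) ^ ((1:ℝ)/2)))^2 = 36*p^2*H'^2*(1+p^2) := by
      rw [neg_pow, mul_pow, mul_pow, h1]; ring
    have e2 : 4 * (3*H*(2+p^2)*(1+p^2) ^ (-(1:ℝ)/2)) * (p^2*(H'' - 2*ε*H)*(1+p^2) ^ ((3:ℝ)/2))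
        = 12*H*(2+p^2)*p^2*(H'' - 2*ε*H)*(1+p^2) := by
      rw [show 4 * (3*H*(2+p^2)*(1+p^2) ^ (-(1:ℝ)/2)) * (p^2*(H'' - 2*ε*H)*(1+p^2) ^ ((3:ℝ)/2))
          = 12*H*(2+p^2)*p^2*(H'' - 2*ε*H)*((1+p^2) ^ (-(1:ℝ)/2) * (1+p^2) ^ ((3:ℝ)/2)) by ring,
        h2]
    rw [e1, e2]
    nlinarith [mul_nonneg (mul_nonneg (mul_nonneg (sq_nonneg p) (sq_nonneg p)) hs.le) key]
  · nlinarith [mul_nonneg (mul_nonneg (mul_nonneg (sq_nonneg p) hs.le) hH)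
      (sub_nonneg.mpr hstruct), mul_nonneg (mul_nonneg (sq_nonneg p) hs.le) (sub_nonneg.mpr hstruct)]
end

section
/- Let u be a smooth function on an open set U ⊂ ℝⁿ and set φ = |∇u|²/2. Then at every point of U, ∑_{α,β} [(1+|∇u|²)δ_{αβ} − u_α u_β] φ_{αβ} = ∑_{α,β,γ} u_γ [(1+|∇u|²)δ_{αβ} − u_α u_β] u_{γαβ} + (1+|∇u|²)∑_{α,β} u_{αβ}² − ∑_γ φ_γ², where φ_γ = ∑_α u_α u_{αγ}. -/
/-- First partial derivative in the `α`-th coordinate direction. -/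
noncomputable def pd (n : ℕ) (u : EuclideanSpace ℝ (Fin n) → ℝ) (α : Fin n)
    (x : EuclideanSpace ℝ (Fin n)) : ℝ :=
  fderiv ℝ u x (EuclideanSpace.single α 1)

/-- Second partial derivative `u_{αβ}`. -/
noncomputable def pd2 (n : ℕ) (u : EuclideanSpace ℝ (Fin n) → ℝ) (α β : Fin n)
    (x : EuclideanSpace ℝ (Fin n)) : ℝ :=
  pd n (pd n u β) α x

/-- Third partial derivative `u_{γαβ}`. -/
noncomputable def pd3 (n : ℕ) (u : EuclideanSpace ℝ (Fin n) → ℝ) (γ α β : Fin n)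
    (x : EuclideanSpace ℝ (Fin n)) : ℝ :=
  pd n (pd n (pd n u β) α) γ x

section helpers
variable {n : ℕ} {U : Set (EuclideanSpace ℝ (Fin n))} {f u : EuclideanSpace ℝ (Fin n) → ℝ}
  {x : EuclideanSpace ℝ (Fin n)}

theorem contDiffOn_pd {k : WithTop ℕ∞} (hU : IsOpen U) (hf : ContDiffOn ℝ (k+1) f U)
    (β : Fin n) : ContDiffOn ℝ k (pd n f β) U := by
  have h := hf.fderiv_of_isOpen hU le_rfl
  exact h.clm_apply contDiffOn_const

theorem diffAt_of_contDiffOn {k : WithTop ℕ∞} (hU : IsOpen U) (hf : ContDiffOn ℝ k f U)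
    (hk : 1 ≤ k) (hx : x ∈ U) : DifferentiableAt ℝ f x :=
  ((hf x hx).contDiffAt (hU.mem_nhds hx)).differentiableAt (lt_of_lt_of_le zero_lt_one hk).ne'

theorem pd2_symm {k : WithTop ℕ∞} (hU : IsOpen U) (hf : ContDiffOn ℝ k f U) (hk : 2 ≤ k)
    (hx : x ∈ U) (α β : Fin n) :
    pd2 n f α β x = pd2 n f β α x := by
  have hC : ContDiffAt ℝ k f x := (hf x hx).contDiffAt (hU.mem_nhds hx)
  have hsym := hC.isSymmSndFDerivAt (by simpa [minSmoothness_of_isRCLikeNormedField] using hk)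
  have hdf : DifferentiableAt ℝ (fderiv ℝ f) x := by
    have : ContDiffAt ℝ 1 (fderiv ℝ f) x := hC.fderiv_right (by exact_mod_cast hk)
    exact this.differentiableAt one_ne_zero
  have key : ∀ v w : EuclideanSpace ℝ (Fin n),
      fderiv ℝ (fun y => fderiv ℝ f y v) x w = fderiv ℝ (fderiv ℝ f) x w v := by
    intro v w
    rw [fderiv_clm_apply hdf (differentiableAt_const v)]
    simp
  show fderiv ℝ (fun y => fderiv ℝ f y (EuclideanSpace.single β 1)) x (EuclideanSpace.single α 1)
      = fderiv ℝ (fun y => fderiv ℝ f y (EuclideanSpace.single α 1)) x (EuclideanSpace.single β 1)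
  rw [key, key]
  exact hsym _ _

theorem hu2 (hU : IsOpen U) (hu : ContDiffOn ℝ 3 u U) (β : Fin n) :
    ContDiffOn ℝ 2 (pd n u β) U :=
  contDiffOn_pd hU (by exact_mod_cast hu) β

theorem hu1 (hU : IsOpen U) (hu : ContDiffOn ℝ 3 u U) (β γ : Fin n) :
    ContDiffOn ℝ 1 (pd n (pd n u β) γ) U :=
  contDiffOn_pd hU (by exact_mod_cast hu2 hU hu β) γ

/-- swap inner two derivatives -/
theorem pd3_swap_inner (hU : IsOpen U) (hu : ContDiffOn ℝ 3 u U) (hx : x ∈ U) (γ α β : Fin n) :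
    pd3 n u γ α β x = pd3 n u γ β α x := by
  have heq : (fun y => pd n (pd n u β) α y) =ᶠ[nhds x] (fun y => pd n (pd n u α) β y) := by
    filter_upwards [hU.mem_nhds hx] with y hy
    exact pd2_symm hU hu (by norm_num) hy α β
  show fderiv ℝ (pd n (pd n u β) α) x _ = fderiv ℝ (pd n (pd n u α) β) x _
  rw [heq.fderiv_eq]

/-- full symmetry needed: `u_{γαβ} = u_{αβγ}` -/
theorem pd3_symm (hU : IsOpen U) (hu : ContDiffOn ℝ 3 u U) (hx : x ∈ U) (γ α β : Fin n) :
    pd3 n u γ α β x = pd3 n u α β γ x := by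
  have h1 : pd3 n u γ α β x = pd3 n u α γ β x :=
    pd2_symm hU (hu2 hU hu β) le_rfl hx γ α
  rw [h1, pd3_swap_inner hU hu hx α γ β]

theorem pd_phi (hU : IsOpen U) (hu : ContDiffOn ℝ 3 u U) (hx : x ∈ U) (γ : Fin n) :
    pd n (fun y => (∑ δ, (pd n u δ y)^2) / 2) γ x = ∑ α, pd n u α x * pd2 n u α γ x := by
  have hd : ∀ δ : Fin n, HasFDerivAt (pd n u δ) (fderiv ℝ (pd n u δ) x) x := fun δ =>
    (diffAt_of_contDiffOn hU (hu2 hU hu δ) (by norm_num) hx).hasFDerivAt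
  have hsq : ∀ δ : Fin n, HasFDerivAt (fun y => (pd n u δ y)^2)
      (pd n u δ x • fderiv ℝ (pd n u δ) x + pd n u δ x • fderiv ℝ (pd n u δ) x) x := by
    intro δ
    simpa [pow_two] using (hd δ).fun_mul (hd δ)
  have hsum := HasFDerivAt.fun_sum (u := Finset.univ) (fun δ _ => hsq δ)
  have hphi : HasFDerivAt (fun y => (∑ δ, (pd n u δ y)^2) / 2)
      ((2:ℝ)⁻¹ • ∑ δ, (pd n u δ x • fderiv ℝ (pd n u δ) x + pd n u δ x • fderiv ℝ (pd n u δ) x)) x := by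
    simpa [div_eq_inv_mul, smul_eq_mul] using hsum.fun_const_smul (2:ℝ)⁻¹
  have := hphi.fderiv
  show fderiv ℝ _ x _ = _
  rw [this]
  simp only [ContinuousLinearMap.smul_apply, ContinuousLinearMap.coe_sum', Finset.sum_apply,
    ContinuousLinearMap.add_apply, smul_eq_mul]
  rw [Finset.mul_sum]
  apply Finset.sum_congr rfl
  intro δ _
  have : fderiv ℝ (pd n u δ) x (EuclideanSpace.single γ 1) = pd2 n u γ δ x := rfl
  rw [this, pd2_symm hU (by exact_mod_cast hu) (by norm_num) hx γ δ]
  ring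

theorem pd2_phi (hU : IsOpen U) (hu : ContDiffOn ℝ 3 u U) (hx : x ∈ U) (α β : Fin n) :
    pd2 n (fun y => (∑ δ, (pd n u δ y)^2) / 2) α β x
      = ∑ γ, (pd2 n u α γ x * pd2 n u β γ x + pd n u γ x * pd3 n u α β γ x) := by
  have heq : (pd n (fun y => (∑ δ, (pd n u δ y)^2) / 2) β) =ᶠ[nhds x]
      (fun y => ∑ γ, pd n u γ y * pd2 n u γ β y) := by
    filter_upwards [hU.mem_nhds hx] with y hy
    exact pd_phi hU hu hy β
  show fderiv ℝ (pd n (fun y => (∑ δ, (pd n u δ y)^2) / 2) β) x _ = _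
  rw [heq.fderiv_eq]
  have hd1 : ∀ γ : Fin n, HasFDerivAt (pd n u γ) (fderiv ℝ (pd n u γ) x) x := fun γ =>
    (diffAt_of_contDiffOn hU (hu2 hU hu γ) (by norm_num) hx).hasFDerivAt
  have hd2 : ∀ γ : Fin n, HasFDerivAt (pd n (pd n u β) γ)
      (fderiv ℝ (pd n (pd n u β) γ) x) x := fun γ =>
    (diffAt_of_contDiffOn hU (hu1 hU hu β γ) le_rfl hx).hasFDerivAt
  have hG : HasFDerivAt (fun y => ∑ γ, pd n u γ y * pd2 n u γ β y)
      (∑ γ, (pd n u γ x • fderiv ℝ (pd n (pd n u β) γ) x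
        + pd2 n u γ β x • fderiv ℝ (pd n u γ) x)) x :=
    HasFDerivAt.fun_sum (fun γ _ => (hd1 γ).fun_mul (hd2 γ))
  rw [hG.fderiv]
  simp only [ContinuousLinearMap.coe_sum', Finset.sum_apply, ContinuousLinearMap.add_apply,
    ContinuousLinearMap.smul_apply, smul_eq_mul]
  apply Finset.sum_congr rfl
  intro γ _
  have e1 : fderiv ℝ (pd n (pd n u β) γ) x (EuclideanSpace.single α 1) = pd3 n u α γ β x := rfl
  have e2 : fderiv ℝ (pd n u γ) x (EuclideanSpace.single α 1) = pd2 n u α γ x := rfl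
  rw [e1, e2, pd3_swap_inner hU hu hx α γ β,
    pd2_symm hU (by exact_mod_cast hu) (by norm_num) hx γ β]
  ring

end helpers
theorem alg {n : ℕ} (g : Fin n → ℝ) (H : Fin n → Fin n → ℝ) (T : Fin n → Fin n → Fin n → ℝ)
    (hT : ∀ γ α β, T γ α β = T α β γ) :
    (∑ α, ∑ β, ((1 + ∑ γ, (g γ)^2) * (if α = β then (1:ℝ) else 0) - g α * g β)
        * (∑ γ, (H α γ * H β γ + g γ * T α β γ)))
    = (∑ γ, ∑ α, ∑ β, g γ *
          (((1 + ∑ δ, (g δ)^2) * (if α = β then (1:ℝ) else 0) - g α * g β) * T γ α β))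
      + (1 + ∑ γ, (g γ)^2) * (∑ α, ∑ β, (H α β)^2)
      - ∑ γ, (∑ α, g α * H α γ)^2 := by
  set s := ∑ γ, (g γ)^2 with hs
  have h1 : (∑ γ, ∑ α, ∑ β, g γ * (((1 + s) * (if α = β then (1:ℝ) else 0) - g α * g β) * T γ α β))
      = ∑ α, ∑ β, ((1 + s) * (if α = β then (1:ℝ) else 0) - g α * g β) * ∑ γ, g γ * T α β γ := by
    rw [Finset.sum_comm]
    apply Finset.sum_congr rfl; intro α _
    rw [Finset.sum_comm]
    apply Finset.sum_congr rfl; intro β _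
    rw [Finset.mul_sum]
    apply Finset.sum_congr rfl; intro γ _
    rw [hT γ α β]; ring
  rw [h1]
  have h2 : (∑ γ, (∑ α, g α * H α γ)^2)
      = ∑ α, ∑ β, (g α * g β) * ∑ γ, H α γ * H β γ := by
    have e : ∀ γ : Fin n, (∑ α, g α * H α γ)^2
        = ∑ α, ∑ β, (g α * H α γ) * (g β * H β γ) := by
      intro γ; rw [pow_two, Finset.sum_mul_sum]
    simp only [e]
    rw [Finset.sum_comm]
    apply Finset.sum_congr rfl; intro α _
    rw [Finset.sum_comm]
    apply Finset.sum_congr rfl; intro β _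
    rw [Finset.mul_sum]
    apply Finset.sum_congr rfl; intro γ _
    ring
  rw [h2]
  have h3 : (∑ α, ∑ β, ((1 + s) * (if α = β then (1:ℝ) else 0))
        * ∑ γ, H α γ * H β γ) = (1 + s) * ∑ α, ∑ β, (H α β)^2 := by
    have e : ∀ α : Fin n, (∑ β, ((1 + s) * (if α = β then (1:ℝ) else 0)) * ∑ γ, H α γ * H β γ)
        = (1 + s) * ∑ γ, (H α γ)^2 := by
      intro α
      have e2 : ∀ β : Fin n, ((1 + s) * (if α = β then (1:ℝ) else 0)) * ∑ γ, H α γ * H β γ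
          = if α = β then (1 + s) * ∑ γ, H α γ * H β γ else 0 := by
        intro β; split <;> simp
      rw [Finset.sum_congr rfl (fun β _ => e2 β), Finset.sum_ite_eq]
      simp [pow_two]
    simp only [e]
    rw [Finset.mul_sum]
  -- now expand the left-hand side
  have expand : ∀ α β : Fin n,
      ((1 + s) * (if α = β then (1:ℝ) else 0) - g α * g β)
          * (∑ γ, (H α γ * H β γ + g γ * T α β γ))
      = ((1 + s) * (if α = β then (1:ℝ) else 0)) * (∑ γ, H α γ * H β γ)
        + ((1 + s) * (if α = β then (1:ℝ) else 0) - g α * g β) * (∑ γ, g γ * T α β γ)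
        - (g α * g β) * (∑ γ, H α γ * H β γ) := by
    intro α β
    rw [Finset.sum_add_distrib]
    ring
  rw [Finset.sum_congr rfl (fun α (_ : α ∈ Finset.univ) =>
    Finset.sum_congr rfl (fun β (_ : β ∈ Finset.univ) => expand α β))]
  simp only [Finset.sum_add_distrib, Finset.sum_sub_distrib]
  rw [h3]
  ring

theorem stmt_11 (n : ℕ) (U : Set (EuclideanSpace ℝ (Fin n))) (hU : IsOpen U)
    (u : EuclideanSpace ℝ (Fin n) → ℝ) (hu : ContDiffOn ℝ 3 u U) :
    ∀ x ∈ U,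
      (∑ α, ∑ β,
          ((1 + ∑ γ, (pd n u γ x)^2) * (if α = β then (1:ℝ) else 0)
              - pd n u α x * pd n u β x)
            * pd2 n (fun y => (∑ γ, (pd n u γ y)^2) / 2) α β x)
        = (∑ γ, ∑ α, ∑ β, pd n u γ x *
              (((1 + ∑ δ, (pd n u δ x)^2) * (if α = β then (1:ℝ) else 0)
                  - pd n u α x * pd n u β x) * pd3 n u γ α β x))
          + (1 + ∑ γ, (pd n u γ x)^2) * (∑ α, ∑ β, (pd2 n u α β x)^2)
          - ∑ γ, (pd n (fun y => (∑ δ, (pd n u δ y)^2) / 2) γ x)^2 := by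
  intro x hx
  have e2 : ∀ α β : Fin n, pd2 n (fun y => (∑ γ, (pd n u γ y)^2) / 2) α β x
      = ∑ γ, (pd2 n u α γ x * pd2 n u β γ x + pd n u γ x * pd3 n u α β γ x) :=
    fun α β => pd2_phi hU hu hx α β
  have e1 : ∀ γ : Fin n, pd n (fun y => (∑ δ, (pd n u δ y)^2) / 2) γ x
      = ∑ α, pd n u α x * pd2 n u α γ x := fun γ => pd_phi hU hu hx γ
  simp only [e2, e1]
  exact alg (fun α => pd n u α x) (fun α β => pd2 n u α β x)
    (fun γ α β => pd3 n u γ α β x) (fun γ α β => pd3_symm hU hu hx γ α β)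
end
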